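/- Let α be an action of a locally compact group G on a pair (A,B) of von Neumann algebras, and suppose there exists a normal G-equivariant conditional expectation E from A onto B. Then π_B^α is (unitarily equivalent to) a subrepresentation of π_A^α; specifically, the canonical positive isometry q_E : L²(B) → L²(A) satisfying ⟨ξ, E(a)η⟩ = ⟨q_E ξ, a q_E η⟩ intertwines π_B^α and π_A^α. -/

import Mathlib

open scoped ComplexOrder

/-- A standard form of a von Neumann algebra `M ⊆ B(H)`. -/
structure StandardForm {H : Type*} [NormedAddCommGroup H] [InnerProductSpace ℂ H]
    [CompleteSpace H] (M : VonNeumannAlgebra H) where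
  J : H ≃ₗᵢ⋆[ℂ] H
  P : Set H
  J_involutive : ∀ ξ : H, J (J ξ) = ξ
  selfDual : ∀ ξ : H, ξ ∈ P ↔ ∀ η ∈ P, 0 ≤ (inner ℂ ξ η : ℂ)
  J_fix : ∀ ξ ∈ P, J ξ = ξ
  JMJ_commutant : ∀ x ∈ M, ∃ y ∈ M.commutant, ∀ ξ : H, J (x (J ξ)) = y ξ
  commutant_JMJ : ∀ y ∈ M.commutant, ∃ x ∈ M, ∀ ξ : H, J (x (J ξ)) = y ξ
  cone_stable : ∀ x ∈ M, ∀ ξ ∈ P, x (J (x (J ξ))) ∈ P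

/-- Normality (σ-weak continuity) of a linear map on `B(H)`, expressed through convergence of
matrix coefficients of bounded sequences. -/
def IsNormalMap {H : Type*} [NormedAddCommGroup H] [InnerProductSpace ℂ H] [CompleteSpace H]
    (E : (H →L[ℂ] H) →ₗ[ℂ] (H →L[ℂ] H)) : Prop :=
  ∀ (x : ℕ → (H →L[ℂ] H)) (a : H →L[ℂ] H), Bornology.IsBounded (Set.range x) →
    (∀ ξ η : H, Filter.Tendsto (fun n => (inner ℂ ξ (x n η) : ℂ)) Filter.atTop
      (nhds (inner ℂ ξ (a η)))) →
    ∀ ξ η : H, Filter.Tendsto (fun n => (inner ℂ ξ (E (x n) η) : ℂ)) Filter.atTop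
      (nhds (inner ℂ ξ (E a η)))

/-!
For a cone vector `ζ ∈ P_B`, both `q ζ` and `π_A(s⁻¹) q (π_B(s) ζ)` lie in the cone `P_A`, and by
the equivariance of `E` and the unitarity of the implementations both induce the vector state
`a ↦ ⟨ζ, E(a) ζ⟩` on `A`. A vector state has at most one representative in the self-dual cone of
a standard form, so the two vectors coincide; as `P_B` spans `L²(B)`, `q` intertwines `π_B` and
`π_A`.
-/

open scoped InnerProductSpace

theorem Complex.eq_zero_of_forall_nonneg_mul_add_sq_mul {a b : ℂ}
    (h : ∀ t : ℝ, 0 ≤ t * b + t ^ 2 * a) : b = 0 := by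
  have hparts : ∀ t : ℝ, 0 ≤ a.re * (t * t) + b.re * t + 0 ∧ 0 ≤ a.im * (t * t) + b.im * t + 0 :=
    fun t => by
      obtain ⟨hre, him⟩ := Complex.nonneg_iff.1 (h t)
      simp only [Complex.add_re, Complex.add_im, Complex.mul_re, Complex.mul_im,
        Complex.ofReal_re, Complex.ofReal_im, ← Complex.ofReal_pow] at hre him
      constructor <;> nlinarith
  have hre := discrim_le_zero fun t => (hparts t).1
  have him := discrim_le_zero fun t => (hparts t).2
  simp only [discrim, mul_zero, sub_zero] at hre him
  exact Complex.ext (pow_eq_zero_iff two_ne_zero |>.1 (le_antisymm hre (sq_nonneg _)))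
    (pow_eq_zero_iff two_ne_zero |>.1 (le_antisymm him (sq_nonneg _)))

namespace VonNeumannAlgebra

variable {H : Type*} [NormedAddCommGroup H] [InnerProductSpace ℂ H] [CompleteSpace H]
  (M : VonNeumannAlgebra H)

noncomputable def cyclicSubspace (u : H) : Submodule ℂ H :=
  ((Subalgebra.toSubmodule M.toSubalgebra).map
    (ContinuousLinearMap.apply ℂ H u : (H →L[ℂ] H) →ₗ[ℂ] H)).topologicalClosure

instance (u : H) : (M.cyclicSubspace u).HasOrthogonalProjection := by
  unfold cyclicSubspace
  infer_instance

theorem self_mem_cyclicSubspace (u : H) : u ∈ M.cyclicSubspace u :=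
  Submodule.le_topologicalClosure _ ⟨1, one_mem M, rfl⟩

theorem cyclicSubspace_mem_invtSubmodule {y : H →L[ℂ] H} (hy : y ∈ M) (u : H) :
    M.cyclicSubspace u ∈ Module.End.invtSubmodule y := by
  refine Submodule.topologicalClosure_mem_invtSubmodule ((Module.End.mem_invtSubmodule _).2 ?_)
  rintro _ ⟨z, hz, rfl⟩
  exact ⟨y * z, (mul_mem hy hz : y * z ∈ M), rfl⟩

theorem mem_orthogonal_cyclicSubspace_iff {u v : H} :
    v ∈ (M.cyclicSubspace u)ᗮ ↔ ∀ y ∈ M, ⟪y u, v⟫_ℂ = 0 := by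
  simp [cyclicSubspace, Submodule.orthogonal_closure, Submodule.mem_orthogonal]

theorem starProjection_cyclicSubspace_commutant_mem (u : H) :
    (M.commutant.cyclicSubspace u).starProjection ∈ M := by
  rw [IsStarProjection.mem_iff (isStarProjection_starProjection) M]
  intro y hy
  rw [Submodule.range_starProjection]
  exact M.commutant.cyclicSubspace_mem_invtSubmodule hy u

end VonNeumannAlgebra

section UnitaryRepresentation

variable {G H : Type*} [Group G] [NormedAddCommGroup H] [InnerProductSpace ℂ H] [CompleteSpace H]
  {π : G →* (H →L[ℂ] H)}

theorem inner_conj_apply_eq_inner_apply (hπ : ∀ s, (π s).adjoint = π s⁻¹) (s : G)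
    (x : H →L[ℂ] H) (ξ η : H) : ⟪ξ, (π s * x * π s⁻¹) η⟫_ℂ = ⟪π s⁻¹ ξ, x (π s⁻¹ η)⟫_ℂ := by
  rw [← hπ, ContinuousLinearMap.adjoint_inner_left]
  rfl

end UnitaryRepresentation

namespace StandardForm

variable {H : Type*} [NormedAddCommGroup H] [InnerProductSpace ℂ H] [CompleteSpace H]
  {M : VonNeumannAlgebra H} (sf : StandardForm M)

theorem inner_nonneg {ξ η : H} (hξ : ξ ∈ sf.P) (hη : η ∈ sf.P) : 0 ≤ ⟪ξ, η⟫_ℂ :=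
  (sf.selfDual ξ).1 hξ η hη

theorem re_inner_J_J (ξ η : H) : (⟪sf.J ξ, sf.J η⟫_ℂ).re = (⟪ξ, η⟫_ℂ).re := by
  simp only [← RCLike.re_to_complex, re_inner_eq_norm_add_mul_self_sub_norm_sub_mul_self_div_four,
    ← map_add, ← map_sub, LinearIsometryEquiv.norm_map]

theorem inner_J_J (ξ η : H) : ⟪sf.J ξ, sf.J η⟫_ℂ = ⟪η, ξ⟫_ℂ := by
  have him := sf.re_inner_J_J ξ (Complex.I • η)
  rw [LinearIsometryEquiv.map_smulₛₗ, Complex.conj_I, inner_smul_right, inner_smul_right,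
    neg_mul, Complex.neg_re, Complex.I_mul_re, Complex.I_mul_re] at him
  refine Complex.ext ?_ ?_
  · rw [sf.re_inner_J_J, ← RCLike.re_to_complex, inner_re_symm]; rfl
  · rw [← RCLike.im_to_complex (x := ⟪η, ξ⟫_ℂ), inner_im_symm, RCLike.im_to_complex]
    linarith

theorem inner_eq_ofReal_re {ξ η : H} (hξ : sf.J ξ = ξ) (hη : sf.J η = η) :
    ⟪ξ, η⟫_ℂ = ((⟪ξ, η⟫_ℂ).re : ℂ) :=
  (Complex.conj_eq_iff_re.1 (by rw [inner_conj_symm, ← sf.inner_J_J, hξ, hη])).symm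

theorem mem_P_iff_forall_re_inner_nonneg {ξ : H} (hξ : sf.J ξ = ξ) :
    ξ ∈ sf.P ↔ ∀ η ∈ sf.P, 0 ≤ (⟪ξ, η⟫_ℂ).re := by
  rw [sf.selfDual]
  refine forall₂_congr fun η hη => ?_
  rw [sf.inner_eq_ofReal_re hξ (sf.J_fix η hη), Complex.zero_le_real, Complex.ofReal_re]

theorem zero_mem_P : (0 : H) ∈ sf.P :=
  (sf.selfDual 0).2 fun η _ => by simp

theorem add_mem_P {ξ η : H} (hξ : ξ ∈ sf.P) (hη : η ∈ sf.P) : ξ + η ∈ sf.P :=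
  (sf.selfDual _).2 fun ζ hζ => by
    rw [inner_add_left]
    exact add_nonneg (sf.inner_nonneg hξ hζ) (sf.inner_nonneg hη hζ)

theorem smul_mem_P {t : ℝ} (ht : 0 ≤ t) {ξ : H} (hξ : ξ ∈ sf.P) : t • ξ ∈ sf.P :=
  (sf.selfDual _).2 fun ζ hζ => by
    rw [← Complex.coe_smul, inner_smul_left, Complex.conj_ofReal]
    exact mul_nonneg (Complex.zero_le_real.2 ht) (sf.inner_nonneg hξ hζ)

theorem convex_P : Convex ℝ sf.P := fun _ hx _ hy _ _ ha hb _ =>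
  sf.add_mem_P (sf.smul_mem_P ha hx) (sf.smul_mem_P hb hy)

theorem isClosed_P : IsClosed sf.P := by
  have hP : sf.P = ⋂ η ∈ sf.P, {ξ : H | 0 ≤ ⟪ξ, η⟫_ℂ} := by
    ext ξ
    simp only [Set.mem_iInter, Set.mem_ofPred_eq, sf.selfDual ξ]
  rw [hP]
  exact isClosed_biInter fun η _ => isClosed_le continuous_const (by fun_prop)

/-- The decomposition is `ζ = u - (u - ζ)` with `u` the point of the closed convex cone `P`
nearest to `ζ`; the variational inequality characterising `u` gives everything. -/
theorem exists_sub_eq_of_J_eq {ζ : H} (hζ : sf.J ζ = ζ) :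
    ∃ u ∈ sf.P, ∃ v ∈ sf.P, ζ = u - v ∧ ⟪u, v⟫_ℂ = 0 := by
  let := InnerProductSpace.complexToReal (G := H)
  obtain ⟨u, hu, hmin⟩ := exists_norm_eq_iInf_of_complete_convex ⟨0, sf.zero_mem_P⟩
    sf.isClosed_P.isComplete sf.convex_P ζ
  have hvar : ∀ w ∈ sf.P, (⟪ζ - u, w - u⟫_ℂ).re ≤ 0 :=
    (norm_eq_iInf_iff_real_inner_le_zero sf.convex_P hu).1 hmin
  have hJu : sf.J u = u := sf.J_fix u hu
  have hJv : sf.J (u - ζ) = u - ζ := by rw [map_sub, hJu, hζ]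
  have hv : u - ζ ∈ sf.P := by
    refine (sf.mem_P_iff_forall_re_inner_nonneg hJv).2 fun η hη => ?_
    have := hvar (u + η) (sf.add_mem_P hu hη)
    rw [add_sub_cancel_left, ← neg_sub u ζ, inner_neg_left, Complex.neg_re] at this
    linarith
  refine ⟨u, hu, u - ζ, hv, (sub_sub_cancel u ζ).symm, ?_⟩
  have h0 := hvar 0 sf.zero_mem_P
  have h2 := hvar (u + u) (sf.add_mem_P hu hu)
  rw [zero_sub, inner_neg_right, Complex.neg_re] at h0
  rw [add_sub_cancel_right] at h2
  rw [sf.inner_eq_ofReal_re hJu hJv, ← RCLike.re_to_complex, inner_re_symm, ← neg_sub ζ u,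
    inner_neg_left, map_neg, RCLike.re_to_complex, le_antisymm h2 (by linarith), neg_zero,
    Complex.ofReal_zero]

theorem span_P_eq_top : Submodule.span ℂ sf.P = ⊤ := by
  have hfixed : ∀ ζ, sf.J ζ = ζ → ζ ∈ Submodule.span ℂ sf.P := fun ζ hζ => by
    obtain ⟨u, hu, v, hv, rfl, -⟩ := sf.exists_sub_eq_of_J_eq hζ
    exact sub_mem (Submodule.subset_span hu) (Submodule.subset_span hv)
  refine eq_top_iff.2 fun ξ _ => ?_
  have hre : sf.J ((2⁻¹ : ℂ) • (ξ + sf.J ξ)) = (2⁻¹ : ℂ) • (ξ + sf.J ξ) := by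
    simp only [LinearIsometryEquiv.map_smulₛₗ, map_add, sf.J_involutive, map_inv₀, map_ofNat]
    module
  have him : sf.J ((2⁻¹ * Complex.I) • (sf.J ξ - ξ)) = (2⁻¹ * Complex.I) • (sf.J ξ - ξ) := by
    simp only [LinearIsometryEquiv.map_smulₛₗ, map_sub, sf.J_involutive, map_mul, map_inv₀,
      map_ofNat, Complex.conj_I]
    module
  have hξ : ξ = (2⁻¹ : ℂ) • (ξ + sf.J ξ) + Complex.I • (2⁻¹ * Complex.I) • (sf.J ξ - ξ) := by
    rw [smul_smul, ← mul_assoc, mul_comm Complex.I, mul_assoc, Complex.I_mul_I]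
    module
  rw [hξ]
  exact add_mem (hfixed _ hre) (Submodule.smul_mem _ _ (hfixed _ him))

/-- Pair `v` with the cone vector `(1 + t x) J (1 + t x) J u = u + t (y u + x u) + t² x y u`:
the result is nonnegative for every real `t`, so its linear coefficient vanishes. -/
theorem inner_apply_add_inner_apply_eq_zero {u v : H} (hu : u ∈ sf.P) (hv : v ∈ sf.P)
    (hvu : ⟪v, u⟫_ℂ = 0) {x y : H →L[ℂ] H} (hx : x ∈ M) (hxy : ∀ ξ, sf.J (x (sf.J ξ)) = y ξ) :
    ⟪v, y u⟫_ℂ + ⟪v, x u⟫_ℂ = 0 := by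
  refine Complex.eq_zero_of_forall_nonneg_mul_add_sq_mul (a := ⟪v, x (y u)⟫_ℂ) fun t => ?_
  have hJu : sf.J u = u := sf.J_fix u hu
  have hJxu : sf.J (x u) = y u := by rw [← hxy, hJu]
  have hmem : 1 + (t : ℂ) • x ∈ M := add_mem (one_mem M) (M.smul_mem hx _)
  have hw : (1 + (t : ℂ) • x) (sf.J ((1 + (t : ℂ) • x) (sf.J u)))
      = u + (t : ℂ) • y u + (t : ℂ) • x u + ((t : ℂ) ^ 2) • x (y u) := by
    simp only [add_apply, one_apply_eq_self, smul_apply, hJu, map_add, map_smul,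
      LinearIsometryEquiv.map_smulₛₗ, Complex.conj_ofReal, hJxu]
    module
  have hpos := sf.inner_nonneg hv (hw ▸ sf.cone_stable _ hmem u hu)
  calc (0 : ℂ) ≤ _ := hpos
    _ = t * (⟪v, y u⟫_ℂ + ⟪v, x u⟫_ℂ) + t ^ 2 * ⟪v, x (y u)⟫_ℂ := by
      simp only [inner_add_right, inner_smul_right, hvu]
      ring

theorem inner_apply_eq_zero_of_mem_commutant {u v : H} (hu : u ∈ sf.P) (hv : v ∈ sf.P)
    (huv : ⟪u, v⟫_ℂ = 0) {y : H →L[ℂ] H} (hy : y ∈ M.commutant) : ⟪y u, v⟫_ℂ = 0 := by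
  obtain ⟨x, hx, hxy⟩ := sf.commutant_JMJ y hy
  have hvu : ⟪v, u⟫_ℂ = 0 := inner_eq_zero_symm.1 huv
  have h1 := sf.inner_apply_add_inner_apply_eq_zero hu hv hvu hx hxy
  have h2 := sf.inner_apply_add_inner_apply_eq_zero hu hv hvu (M.smul_mem hx Complex.I)
    (y := (-Complex.I) • y) fun ξ => by
      simp only [smul_apply, LinearIsometryEquiv.map_smulₛₗ, hxy, Complex.conj_I]
  simp only [smul_apply, inner_smul_right] at h2
  have h2I : (2 * Complex.I) * ⟪v, y u⟫_ℂ = 0 := by linear_combination Complex.I * h1 - h2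
  exact inner_eq_zero_symm.1 ((mul_eq_zero.1 h2I).resolve_left (by simp))

/-- The projection `p ∈ M` onto the closure of `M' u` fixes `u` and kills `v`, so comparing the
two states at `p` gives `⟪σ, u⟫ + ⟪u, τ⟫ = 0` with both terms nonnegative. -/
theorem eq_zero_of_sub_eq_of_inner_apply_eq {σ τ u v : H} (hσ : σ ∈ sf.P) (hτ : τ ∈ sf.P)
    (hu : u ∈ sf.P) (hv : v ∈ sf.P) (hdiff : σ - τ = u - v) (huv : ⟪u, v⟫_ℂ = 0)
    (hstate : ∀ a ∈ M, ⟪σ, a σ⟫_ℂ = ⟪τ, a τ⟫_ℂ) : u = 0 := by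
  set p := (M.commutant.cyclicSubspace u).starProjection
  have hpu : p u = u :=
    Submodule.starProjection_eq_self_iff.2 (M.commutant.self_mem_cyclicSubspace u)
  have hpv : p v = 0 := (Submodule.starProjection_apply_eq_zero_iff _).2 <|
    M.commutant.mem_orthogonal_cyclicSubspace_iff.2 fun _ hy =>
      sf.inner_apply_eq_zero_of_mem_commutant hu hv huv hy
  have hp_symm : ∀ x y, ⟪p x, y⟫_ℂ = ⟪x, p y⟫_ℂ := Submodule.inner_starProjection_left_eq_right _
  have hpdiff : p (σ - τ) = u := by rw [hdiff, map_sub, hpu, hpv, sub_zero]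
  have hsum : ⟪σ, u⟫_ℂ + ⟪u, τ⟫_ℂ = 0 := calc
    _ = ⟪σ, p (σ - τ)⟫_ℂ + ⟪p (σ - τ), τ⟫_ℂ := by rw [hpdiff]
    _ = ⟪σ, p σ⟫_ℂ - ⟪τ, p τ⟫_ℂ := by
      simp only [map_sub, inner_sub_left, inner_sub_right, hp_symm]
      ring
    _ = 0 := by rw [hstate p (M.starProjection_cyclicSubspace_commutant_mem u), sub_self]
  obtain ⟨hσu, huτ⟩ :=
    (add_eq_zero_iff_of_nonneg (sf.inner_nonneg hσ hu) (sf.inner_nonneg hu hτ)).1 hsum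
  refine inner_self_eq_zero.1 (calc
    ⟪u, u⟫_ℂ = ⟪u, σ - τ⟫_ℂ + ⟪u, v⟫_ℂ := by rw [hdiff, inner_sub_right]; ring
    _ = 0 := by rw [inner_sub_right, inner_eq_zero_symm.1 hσu, huτ, huv]; ring)

theorem eq_of_forall_inner_apply_eq {σ τ : H} (hσ : σ ∈ sf.P) (hτ : τ ∈ sf.P)
    (hstate : ∀ a ∈ M, ⟪σ, a σ⟫_ℂ = ⟪τ, a τ⟫_ℂ) : σ = τ := by
  have hJ : sf.J (σ - τ) = σ - τ := by rw [map_sub, sf.J_fix σ hσ, sf.J_fix τ hτ]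
  obtain ⟨u, hu, v, hv, hdiff, huv⟩ := sf.exists_sub_eq_of_J_eq hJ
  have hu0 := sf.eq_zero_of_sub_eq_of_inner_apply_eq hσ hτ hu hv hdiff huv hstate
  have hv0 := sf.eq_zero_of_sub_eq_of_inner_apply_eq hτ hσ hv hu
    (by rw [← neg_sub σ τ, hdiff, neg_sub]) (inner_eq_zero_symm.1 huv)
    fun a ha => (hstate a ha).symm
  rwa [hu0, hv0, sub_zero, sub_eq_zero] at hdiff

end StandardForm

theorem condexp_isometry_intertwines_general
    {G : Type*} [Group G]
    {HA HB : Type*}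
    [NormedAddCommGroup HA] [InnerProductSpace ℂ HA] [CompleteSpace HA]
    [NormedAddCommGroup HB] [InnerProductSpace ℂ HB] [CompleteSpace HB]
    (A : VonNeumannAlgebra HA) (B : VonNeumannAlgebra HA)
    (sfA : StandardForm A)
    (B' : VonNeumannAlgebra HB) (sfB : StandardForm B')
    -- Φ is a normal *-isomorphism of B onto B', identifying the standard form of B on HB
    (Φ : (HA →L[ℂ] HA) → (HB →L[ℂ] HB))
    -- π_A^α and π_B^α : the canonical implementations of the action on L²(A) and L²(B)
    (πA : G →* (HA →L[ℂ] HA))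
    (hπAu : ∀ s, ContinuousLinearMap.adjoint (πA s) = πA s⁻¹)
    (hπAP : ∀ s : G, ∀ ξ ∈ sfA.P, πA s ξ ∈ sfA.P)
    (hπA_A : ∀ s : G, ∀ a ∈ A, πA s * a * πA s⁻¹ ∈ A)
    (πB : G →* (HB →L[ℂ] HB))
    (hπBu : ∀ s, ContinuousLinearMap.adjoint (πB s) = πB s⁻¹)
    (hπBP : ∀ s : G, ∀ ξ ∈ sfB.P, πB s ξ ∈ sfB.P)
    (hcompat : ∀ s : G, ∀ b ∈ B, Φ (πA s * b * πA s⁻¹) = πB s * Φ b * πB s⁻¹)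
    -- E is a normal G-equivariant conditional expectation from A onto B
    (E : (HA →L[ℂ] HA) →ₗ[ℂ] (HA →L[ℂ] HA))
    (hE_mem : ∀ a ∈ A, E a ∈ B)
    (hE_equiv : ∀ (s : G) (a : HA →L[ℂ] HA), E (πA s * a * πA s⁻¹) = πA s * E a * πA s⁻¹)
    -- q is the canonical positive isometry q_E : L²(B) → L²(A) associated with E
    (q : HB →L[ℂ] HA)
    (hq_pos : ∀ ξ ∈ sfB.P, q ξ ∈ sfA.P)
    (hq_def : ∀ a ∈ A, ∀ ξ η : HB, (inner ℂ ξ (Φ (E a) η) : ℂ) = inner ℂ (q ξ) (a (q η))) :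
    ∀ (s : G) (ξ : HB), q (πB s ξ) = πA s (q ξ) := by
  intro s
  suffices q ∘L πB s = πA s ∘L q from fun ξ => congr($this ξ)
  refine ContinuousLinearMap.coe_inj.1 (LinearMap.ext_on sfB.span_P_eq_top fun ζ hζ => ?_)
  have hτ : πA s⁻¹ (q (πB s ζ)) ∈ sfA.P := hπAP _ _ (hq_pos _ (hπBP s ζ hζ))
  have hstate : ∀ a ∈ A, ⟪q ζ, a (q ζ)⟫_ℂ = ⟪πA s⁻¹ (q (πB s ζ)), a (πA s⁻¹ (q (πB s ζ)))⟫_ℂ :=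
    fun a ha => by
      rw [← hq_def a ha, ← inner_conj_apply_eq_inner_apply hπAu, ← hq_def _ (hπA_A s a ha),
        hE_equiv, hcompat s _ (hE_mem a ha), inner_conj_apply_eq_inner_apply hπBu]
      simp [← mul_apply_eq_comp, ← map_mul]
  have hστ := sfA.eq_of_forall_inner_apply_eq (hq_pos ζ hζ) hτ hstate
  simp [hστ, ← mul_apply_eq_comp, ← map_mul]

/-- If there is a normal `G`-equivariant conditional expectation `E` from `A`
onto `B`, then the canonical positive isometry `q_E : L²(B) → L²(A)` (characterized by
`⟨ξ, E(a)η⟩ = ⟨q_E ξ, a q_E η⟩`) intertwines `π_B^α` and `π_A^α`; in particular `π_B^α` is a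
subrepresentation of `π_A^α`. -/
theorem condexp_isometry_intertwines
    {G : Type*} [Group G] [TopologicalSpace G] [IsTopologicalGroup G] [LocallyCompactSpace G]
    {HA HB : Type*}
    [NormedAddCommGroup HA] [InnerProductSpace ℂ HA] [CompleteSpace HA]
    [NormedAddCommGroup HB] [InnerProductSpace ℂ HB] [CompleteSpace HB]
    (A : VonNeumannAlgebra HA) (B : VonNeumannAlgebra HA)
    (hBA : ∀ x : HA →L[ℂ] HA, x ∈ B → x ∈ A)
    (sfA : StandardForm A)
    (B' : VonNeumannAlgebra HB) (sfB : StandardForm B')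
    -- Φ is a normal *-isomorphism of B onto B', identifying the standard form of B on HB
    (Φ : (HA →L[ℂ] HA) → (HB →L[ℂ] HB))
    (hΦ_one : Φ 1 = 1)
    (hΦ_add : ∀ b₁ ∈ B, ∀ b₂ ∈ B, Φ (b₁ + b₂) = Φ b₁ + Φ b₂)
    (hΦ_smul : ∀ c : ℂ, ∀ b ∈ B, Φ (c • b) = c • Φ b)
    (hΦ_mul : ∀ b₁ ∈ B, ∀ b₂ ∈ B, Φ (b₁ * b₂) = Φ b₁ * Φ b₂)
    (hΦ_star : ∀ b ∈ B, Φ (star b) = star (Φ b))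
    (hΦ_mem : ∀ b ∈ B, Φ b ∈ B')
    (hΦ_surj : ∀ y : HB →L[ℂ] HB, y ∈ B' → ∃ b ∈ B, Φ b = y)
    (hΦ_inj : ∀ b₁ ∈ B, ∀ b₂ ∈ B, Φ b₁ = Φ b₂ → b₁ = b₂)
    -- π_A^α and π_B^α : the canonical implementations of the action on L²(A) and L²(B)
    (πA : G →* (HA →L[ℂ] HA))
    (hπAu : ∀ s, ContinuousLinearMap.adjoint (πA s) = πA s⁻¹)
    (hπAc : ∀ ξ : HA, Continuous fun s => πA s ξ)
    (hπAP : ∀ s : G, ∀ ξ ∈ sfA.P, πA s ξ ∈ sfA.P)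
    (hπAJ : ∀ (s : G) (ξ : HA), πA s (sfA.J ξ) = sfA.J (πA s ξ))
    (hπA_A : ∀ s : G, ∀ a ∈ A, πA s * a * πA s⁻¹ ∈ A)
    (hπA_B : ∀ s : G, ∀ b ∈ B, πA s * b * πA s⁻¹ ∈ B)
    (πB : G →* (HB →L[ℂ] HB))
    (hπBu : ∀ s, ContinuousLinearMap.adjoint (πB s) = πB s⁻¹)
    (hπBc : ∀ ξ : HB, Continuous fun s => πB s ξ)
    (hπBP : ∀ s : G, ∀ ξ ∈ sfB.P, πB s ξ ∈ sfB.P)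
    (hπBJ : ∀ (s : G) (ξ : HB), πB s (sfB.J ξ) = sfB.J (πB s ξ))
    (hcompat : ∀ s : G, ∀ b ∈ B, Φ (πA s * b * πA s⁻¹) = πB s * Φ b * πB s⁻¹)
    -- E is a normal G-equivariant conditional expectation from A onto B
    (E : (HA →L[ℂ] HA) →ₗ[ℂ] (HA →L[ℂ] HA))
    (hE_mem : ∀ a ∈ A, E a ∈ B)
    (hE_fix : ∀ b ∈ B, E b = b)
    (hE_pos : ∀ a : HA →L[ℂ] HA, a.IsPositive → (E a).IsPositive)
    (hE_norm : ∀ a : HA →L[ℂ] HA, ‖E a‖ ≤ ‖a‖)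
    (hE_bimod : ∀ b₁ ∈ B, ∀ b₂ ∈ B, ∀ a ∈ A, E (b₁ * a * b₂) = b₁ * E a * b₂)
    (hE_normal : IsNormalMap E)
    (hE_equiv : ∀ (s : G) (a : HA →L[ℂ] HA), E (πA s * a * πA s⁻¹) = πA s * E a * πA s⁻¹)
    -- q is the canonical positive isometry q_E : L²(B) → L²(A) associated with E
    (q : HB →L[ℂ] HA)
    (hq_pos : ∀ ξ ∈ sfB.P, q ξ ∈ sfA.P)
    (hq_isom : ∀ ξ : HB, ‖q ξ‖ = ‖ξ‖)
    (hq_def : ∀ a ∈ A, ∀ ξ η : HB, (inner ℂ ξ (Φ (E a) η) : ℂ) = inner ℂ (q ξ) (a (q η))) :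
    ∀ (s : G) (ξ : HB), q (πB s ξ) = πA s (q ξ) :=
  condexp_isometry_intertwines_general A B sfA B' sfB Φ πA hπAu hπAP hπA_A πB hπBu hπBP hcompat E
    hE_mem hE_equiv q hq_pos hq_def
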